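/- arXiv:1910.13183 — 3 statements merged into one kernel-verified Lean document; each statement's English description precedes it below -/
import Mathlib

section
/- Let X be a quasi-normed lattice with quasi-triangle constant K. Then X is complete if and only if for every sequence of positive elements (x_n) in X with ∑ K^n ‖x_n‖ < ∞, the supremum of the partial sums sup_n ∑_{i=1}^n x_i exists in X. -/
/-!
Completeness implies the Riesz–Fischer property: iterating the quasi-triangle inequality gives
`N (∑ i < n, x i) ≤ ∑ i < n, K ^ (i + 1) * N (x i)`, so the partial sums are Cauchy, and since `N`
controls positive parts the limit of an increasing sequence is its supremum.

Conversely, a Cauchy sequence has a subsequence whose increments `d k` are so small that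
`∑ 2 ^ k * K ^ (k + 1) * N (d k)` converges, hence also the same series for `(d k)⁺` and `(d k)⁻`.
For a positive sequence `v` with this property the Riesz–Fischer property yields both
`s = sup ∑_{i ≤ n} v i` and an upper bound `u` of the sums `∑_{i ≤ n} 2 ^ i • v i`. The tail of
`∑ v i` beyond `n` is then at most `2⁻¹ ^ (n + 1) • u`, so `0 ≤ s - ∑_{i ≤ n} v i ≤ 2⁻¹ ^ (n + 1) • u`
and the partial sums converge to `s`. Splitting the increments into positive and negative parts
makes the subsequence, hence the Cauchy sequence, converge.

Real scalars are not assumed to be monotone; only dyadic ones are used, through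
`0 ≤ 2 ^ n • a → 0 ≤ a`, which holds in every lattice-ordered group.
-/

open Filter Topology

structure IsLatticeQuasiNorm {X : Type*} [Lattice X] [AddCommGroup X] [Module ℝ X]
    (K : ℝ) (N : X → ℝ) : Prop where
  one_le_const : 1 ≤ K
  nonneg : ∀ x, 0 ≤ N x
  eq_zero_iff : ∀ x, N x = 0 ↔ x = 0
  smul : ∀ (a : ℝ) (x : X), N (a • x) = |a| * N x
  add_le : ∀ x y, N (x + y) ≤ K * (N x + N y)
  mono_abs : ∀ x y : X, |x| ≤ |y| → N x ≤ N y

def QuasiNormCauchy {X : Type*} [AddGroup X] (N : X → ℝ) (f : ℕ → X) : Prop :=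
  ∀ ε : ℝ, 0 < ε → ∃ n₀, ∀ m ≥ n₀, ∀ n ≥ n₀, N (f m - f n) < ε

def QuasiNormComplete {X : Type*} [AddGroup X] (N : X → ℝ) : Prop :=
  ∀ f : ℕ → X, QuasiNormCauchy N f → ∃ l : X, Tendsto (fun n => N (f n - l)) atTop (𝓝 0)

def RieszFischerProperty {X : Type*} [AddCommMonoid X] [Preorder X] (K : ℝ) (N : X → ℝ) :
    Prop :=
  ∀ x : ℕ → X, (∀ n, 0 ≤ x n) → Summable (fun n => K ^ (n + 1) * N (x n)) →
    ∃ s : X, IsLUB (Set.range fun n => ∑ i ∈ Finset.range (n + 1), x i) s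

theorem QuasiNormCauchy.exists_strictMono {X : Type*} [AddGroup X] {N : X → ℝ} {f : ℕ → X}
    (hf : QuasiNormCauchy N f) {ε : ℕ → ℝ} (hε : ∀ k, 0 < ε k) :
    ∃ φ : ℕ → ℕ, StrictMono φ ∧ ∀ k, N (f (φ (k + 1)) - f (φ k)) < ε k := by
  choose M hM using fun k => hf (ε k) (hε k)
  obtain ⟨φ, hφ, hφM⟩ :=
    extraction_forall_of_eventually' (P := fun k n => M k ≤ n) fun k => ⟨M k, fun _ h => h⟩
  exact ⟨φ, hφ, fun k => hM k _ ((hφM k).trans (hφ k.lt_succ_self).le) _ (hφM k)⟩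

theorem two_pow_smul_eq_nsmul {X : Type*} [AddCommGroup X] [Module ℝ X] (n : ℕ) (a : X) :
    (2 : ℝ) ^ n • a = 2 ^ n • a := by
  rw [← Nat.cast_smul_eq_nsmul ℝ, Nat.cast_pow, Nat.cast_ofNat]

section LatticeOrderedGroup

variable {X : Type*} [Lattice X] [AddCommGroup X] [IsOrderedAddMonoid X]

theorem nonneg_of_two_pow_nsmul_nonneg {a : X} (n : ℕ) (h : 0 ≤ 2 ^ n • a) : 0 ≤ a := by
  induction n generalizing a with
  | zero => simpa using h
  | succ n ih => exact nsmul_two_semiclosed (ih (by rwa [pow_succ, mul_nsmul'] at h))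

variable [Module ℝ X]

theorem le_of_two_pow_smul_le_two_pow_smul {a b : X} (n : ℕ)
    (h : (2 : ℝ) ^ n • a ≤ (2 : ℝ) ^ n • b) : a ≤ b := by
  rw [← sub_nonneg] at h ⊢
  rw [← smul_sub, two_pow_smul_eq_nsmul] at h
  exact nonneg_of_two_pow_nsmul_nonneg n h

theorem sub_partialSum_le_of_isLUB {v : ℕ → X} (hv : ∀ i, 0 ≤ v i) {s u : X}
    (hs : IsLUB (Set.range fun n => ∑ i ∈ Finset.range (n + 1), v i) s)
    (hu : ∀ m, ∑ i ∈ Finset.range (m + 1), (2 : ℝ) ^ i • v i ≤ u) (n : ℕ) :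
    s - ∑ i ∈ Finset.range (n + 1), v i ≤ ((2 : ℝ) ^ (n + 1))⁻¹ • u := by
  set c := ((2 : ℝ) ^ (n + 1))⁻¹ • u
  have hc : (2 : ℝ) ^ (n + 1) • c = u := smul_inv_smul₀ (by positivity) u
  have hu0 : 0 ≤ u := (Finset.sum_nonneg fun i _ => by
    rw [two_pow_smul_eq_nsmul]; exact nsmul_nonneg (hv i) _).trans (hu 0)
  have hc0 : 0 ≤ c := le_of_two_pow_smul_le_two_pow_smul (n + 1) (by rwa [smul_zero, hc])
  rw [sub_le_iff_le_add']
  refine hs.2 ?_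
  rintro _ ⟨m, rfl⟩
  dsimp only
  rcases le_or_gt m n with hmn | hnm
  · exact (Finset.sum_le_sum_of_subset_of_nonneg (Finset.range_subset_range.2 (by omega))
      fun i _ _ => hv i).trans (le_add_of_nonneg_right hc0)
  · rw [← Finset.sum_range_add_sum_Ico _ (by omega : n + 1 ≤ m + 1), add_le_add_iff_left]
    refine le_of_two_pow_smul_le_two_pow_smul (n + 1) ?_
    rw [hc, Finset.smul_sum]
    calc ∑ i ∈ Finset.Ico (n + 1) (m + 1), (2 : ℝ) ^ (n + 1) • v i
        ≤ ∑ i ∈ Finset.Ico (n + 1) (m + 1), (2 : ℝ) ^ i • v i := by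
          refine Finset.sum_le_sum fun i hi => ?_
          rw [two_pow_smul_eq_nsmul, two_pow_smul_eq_nsmul]
          exact nsmul_le_nsmul_left (hv i)
            (Nat.pow_le_pow_right two_pos (Finset.mem_Ico.1 hi).1)
      _ ≤ ∑ i ∈ Finset.range (m + 1), (2 : ℝ) ^ i • v i :=
          Finset.sum_le_sum_of_subset_of_nonneg
            (fun i hi => Finset.mem_range.2 (Finset.mem_Ico.1 hi).2) fun i _ _ => by
            rw [two_pow_smul_eq_nsmul]; exact nsmul_nonneg (hv i) _
      _ ≤ u := hu m

end LatticeOrderedGroup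

namespace IsLatticeQuasiNorm

variable {X : Type*} [Lattice X] [AddCommGroup X] [Module ℝ X] {K : ℝ} {N : X → ℝ}

theorem map_zero (hN : IsLatticeQuasiNorm K N) : N 0 = 0 := by
  simpa using hN.smul 0 0

theorem map_neg (hN : IsLatticeQuasiNorm K N) (x : X) : N (-x) = N x := by
  simpa using hN.smul (-1) x

theorem map_sub_comm (hN : IsLatticeQuasiNorm K N) (x y : X) : N (x - y) = N (y - x) := by
  rw [← neg_sub, hN.map_neg]

theorem tendsto_add (hN : IsLatticeQuasiNorm K N) {l : Filter ℕ} {a b : ℕ → X}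
    (ha : Tendsto (fun n => N (a n)) l (𝓝 0)) (hb : Tendsto (fun n => N (b n)) l (𝓝 0)) :
    Tendsto (fun n => N (a n + b n)) l (𝓝 0) := by
  have hsum : Tendsto (fun n => K * (N (a n) + N (b n))) l (𝓝 0) := by
    simpa using (ha.add hb).const_mul K
  exact squeeze_zero (fun n => hN.nonneg _) (fun n => hN.add_le _ _) hsum

theorem sum_range_le (hN : IsLatticeQuasiNorm K N) (g : ℕ → X) (n : ℕ) :
    N (∑ i ∈ Finset.range n, g i) ≤ ∑ i ∈ Finset.range n, K ^ (i + 1) * N (g i) := by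
  induction n generalizing g with
  | zero => simp [hN.map_zero]
  | succ n ih =>
    have hK : 0 ≤ K := zero_le_one.trans hN.one_le_const
    rw [Finset.sum_range_succ', Finset.sum_range_succ']
    calc N (∑ i ∈ Finset.range n, g (i + 1) + g 0)
        ≤ K * (N (∑ i ∈ Finset.range n, g (i + 1)) + N (g 0)) := hN.add_le _ _
      _ ≤ K * (∑ i ∈ Finset.range n, K ^ (i + 1) * N (g (i + 1)) + N (g 0)) := by
          gcongr; exact ih _
      _ = ∑ i ∈ Finset.range n, K ^ (i + 1 + 1) * N (g (i + 1)) + K ^ (0 + 1) * N (g 0) := by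
          rw [mul_add, Finset.mul_sum]
          congr 1
          · exact Finset.sum_congr rfl fun i _ => by ring
          · ring

theorem sum_Ico_le (hN : IsLatticeQuasiNorm K N) (g : ℕ → X) (a b : ℕ) :
    N (∑ i ∈ Finset.Ico a b, g i) ≤ ∑ i ∈ Finset.Ico a b, K ^ (i + 1) * N (g i) := by
  rw [Finset.sum_Ico_eq_sum_range, Finset.sum_Ico_eq_sum_range]
  refine (hN.sum_range_le _ _).trans (Finset.sum_le_sum fun i _ => ?_)
  gcongr
  · exact hN.nonneg _
  · exact hN.one_le_const
  · omega

theorem quasiNormCauchy_partialSum (hN : IsLatticeQuasiNorm K N) {x : ℕ → X}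
    (hx : Summable fun i => K ^ (i + 1) * N (x i)) :
    QuasiNormCauchy N fun n => ∑ i ∈ Finset.range (n + 1), x i := by
  set S : ℕ → ℝ := fun n => ∑ i ∈ Finset.range n, K ^ (i + 1) * N (x i)
  have hS : ∀ m n, n ≤ m → N (∑ i ∈ Finset.range (m + 1), x i - ∑ i ∈ Finset.range (n + 1), x i)
      ≤ dist (S (m + 1)) (S (n + 1)) := by
    intro m n hnm
    rw [← Finset.sum_Ico_eq_sub _ (by omega), Real.dist_eq, ← Finset.sum_Ico_eq_sub _ (by omega)]
    exact (hN.sum_Ico_le _ _ _).trans (le_abs_self _)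
  intro ε hε
  obtain ⟨n₀, hn₀⟩ := Metric.cauchySeq_iff.1 hx.hasSum.tendsto_sum_nat.cauchySeq ε hε
  refine ⟨n₀, fun m hm n hn => ?_⟩
  rcases le_total n m with h | h
  · exact (hS m n h).trans_lt (hn₀ _ (by omega) _ (by omega))
  · rw [hN.map_sub_comm]
    exact (hS n m h).trans_lt (hn₀ _ (by omega) _ (by omega))

theorem tendsto_of_cauchy_of_tendsto_comp (hN : IsLatticeQuasiNorm K N) {f : ℕ → X}
    (hf : QuasiNormCauchy N f) {φ : ℕ → ℕ} (hφ : ∀ n, n ≤ φ n) {l : X}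
    (hl : Tendsto (fun n => N (f (φ n) - l)) atTop (𝓝 0)) :
    Tendsto (fun n => N (f n - l)) atTop (𝓝 0) := by
  have hfφ : Tendsto (fun n => N (f n - f (φ n))) atTop (𝓝 0) := by
    refine Metric.tendsto_atTop.2 fun ε hε => ?_
    obtain ⟨n₀, hn₀⟩ := hf ε hε
    refine ⟨n₀, fun n hn => ?_⟩
    rw [Real.dist_eq, sub_zero, abs_of_nonneg (hN.nonneg _)]
    exact hn₀ n hn (φ n) (hn.trans (hφ n))
  simpa only [sub_add_sub_cancel] using hN.tendsto_add hfφ hl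

variable [IsOrderedAddMonoid X]

theorem le_of_le_abs (hN : IsLatticeQuasiNorm K N) {a b : X} (ha : 0 ≤ a) (h : a ≤ |b|) :
    N a ≤ N b :=
  hN.mono_abs a b (by rwa [abs_of_nonneg ha])

theorem mono (hN : IsLatticeQuasiNorm K N) {a b : X} (ha : 0 ≤ a) (hab : a ≤ b) : N a ≤ N b :=
  hN.le_of_le_abs ha (hab.trans (le_abs_self b))

theorem posPart_le (hN : IsLatticeQuasiNorm K N) (a : X) : N a⁺ ≤ N a :=
  hN.le_of_le_abs (posPart_nonneg a) (sup_le (le_abs_self a) (abs_nonneg a))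

theorem negPart_le (hN : IsLatticeQuasiNorm K N) (a : X) : N a⁻ ≤ N a :=
  hN.le_of_le_abs (negPart_nonneg a) (sup_le (neg_le_abs a) (abs_nonneg a))

theorem le_of_tendsto_posPart (hN : IsLatticeQuasiNorm K N) {a b : X} {g : ℕ → ℝ}
    (hg : Tendsto g atTop (𝓝 0)) (h : ∀ᶠ n in atTop, N (a - b)⁺ ≤ g n) : a ≤ b := by
  have hzero : N (a - b)⁺ = 0 := le_antisymm (ge_of_tendsto hg h) (hN.nonneg _)
  rwa [hN.eq_zero_iff, posPart_eq_zero, sub_nonpos] at hzero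

theorem isLUB_range_of_tendsto (hN : IsLatticeQuasiNorm K N) {f : ℕ → X} (hf : Monotone f)
    {l : X} (hl : Tendsto (fun n => N (f n - l)) atTop (𝓝 0)) : IsLUB (Set.range f) l := by
  refine ⟨?_, fun b hb => ?_⟩
  · rintro _ ⟨m, rfl⟩
    refine hN.le_of_tendsto_posPart hl (eventually_atTop.2 ⟨m, fun n hn => ?_⟩)
    exact (hN.mono (posPart_nonneg _) (posPart_mono (sub_le_sub_right (hf hn) l))).trans
      (hN.posPart_le _)
  · refine hN.le_of_tendsto_posPart hl (Eventually.of_forall fun n => ?_)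
    rw [hN.map_sub_comm]
    exact (hN.mono (posPart_nonneg _) (posPart_mono (sub_le_sub_left (hb ⟨n, rfl⟩) l))).trans
      (hN.posPart_le _)

theorem rieszFischerProperty_of_complete (hN : IsLatticeQuasiNorm K N)
    (h : QuasiNormComplete N) : RieszFischerProperty K N := by
  intro x hx hsum
  obtain ⟨l, hl⟩ := h _ (hN.quasiNormCauchy_partialSum hsum)
  refine ⟨l, hN.isLUB_range_of_tendsto (monotone_nat_of_le_succ fun n => ?_) hl⟩
  rw [Finset.sum_range_succ _ (n + 1)]
  exact le_add_of_nonneg_right (hx _)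

theorem tendsto_partialSum_sub_of_isLUB (hN : IsLatticeQuasiNorm K N) {v : ℕ → X}
    (hv : ∀ i, 0 ≤ v i) {s u : X}
    (hs : IsLUB (Set.range fun n => ∑ i ∈ Finset.range (n + 1), v i) s)
    (hu : ∀ m, ∑ i ∈ Finset.range (m + 1), (2 : ℝ) ^ i • v i ≤ u) :
    Tendsto (fun n => N (∑ i ∈ Finset.range (n + 1), v i - s)) atTop (𝓝 0) := by
  have hbound : ∀ n, N (∑ i ∈ Finset.range (n + 1), v i - s) ≤ ((2 : ℝ) ^ (n + 1))⁻¹ * N u := by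
    intro n
    rw [hN.map_sub_comm, ← abs_of_pos (by positivity : (0 : ℝ) < ((2 : ℝ) ^ (n + 1))⁻¹),
      ← hN.smul]
    exact hN.mono (sub_nonneg.2 (hs.1 ⟨n, rfl⟩)) (sub_partialSum_le_of_isLUB hv hs hu n)
  have hlim : Tendsto (fun n : ℕ => ((2 : ℝ) ^ (n + 1))⁻¹ * N u) atTop (𝓝 0) := by
    simpa [inv_pow] using ((tendsto_pow_atTop_nhds_zero_of_lt_one (r := (2 : ℝ)⁻¹)
      (by norm_num) (by norm_num)).comp (tendsto_add_atTop_nat 1)).mul_const (N u)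
  exact squeeze_zero (fun n => hN.nonneg _) hbound hlim

theorem exists_tendsto_partialSum (hN : IsLatticeQuasiNorm K N) (hRF : RieszFischerProperty K N)
    {v : ℕ → X} (hv : ∀ i, 0 ≤ v i) (hsum : Summable fun k => 2 ^ k * (K ^ (k + 1) * N (v k))) :
    ∃ s, Tendsto (fun n => N (∑ i ∈ Finset.range (n + 1), v i - s)) atTop (𝓝 0) := by
  have hw : ∀ k, 0 ≤ K ^ (k + 1) * N (v k) := fun k =>
    mul_nonneg (pow_nonneg (zero_le_one.trans hN.one_le_const) _) (hN.nonneg _)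
  obtain ⟨s, hs⟩ := hRF v hv (hsum.of_nonneg_of_le hw fun k =>
    le_mul_of_one_le_left (hw k) (one_le_pow₀ one_le_two))
  obtain ⟨u, hu⟩ := hRF (fun k => (2 : ℝ) ^ k • v k)
    (fun k => by rw [two_pow_smul_eq_nsmul]; exact nsmul_nonneg (hv k) _)
    (hsum.congr fun k => by rw [hN.smul, abs_of_pos (by positivity)]; ring)
  exact ⟨s, hN.tendsto_partialSum_sub_of_isLUB hv hs fun m => hu.1 ⟨m, rfl⟩⟩

theorem complete_of_rieszFischerProperty (hN : IsLatticeQuasiNorm K N)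
    (hRF : RieszFischerProperty K N) : QuasiNormComplete N := by
  intro f hf
  have hK : 0 < K := zero_lt_one.trans_le hN.one_le_const
  -- `ε k` is chosen so that `2 ^ k * K ^ (k + 1) * ε k = 2⁻¹ ^ k`
  obtain ⟨φ, hφ, hd⟩ := hf.exists_strictMono (ε := fun k => ((4 : ℝ) ^ k * K ^ (k + 1))⁻¹)
    fun k => by positivity
  set d := fun k => f (φ (k + 1)) - f (φ k)
  have hsum : ∀ w : ℕ → X, (∀ k, N (w k) ≤ N (d k)) →
      Summable fun k => 2 ^ k * (K ^ (k + 1) * N (w k)) := by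
    intro w hw
    refine summable_geometric_two.of_nonneg_of_le
      (fun k => by have := hN.nonneg (w k); positivity) fun k => ?_
    calc 2 ^ k * (K ^ (k + 1) * N (w k))
        ≤ 2 ^ k * (K ^ (k + 1) * ((4 : ℝ) ^ k * K ^ (k + 1))⁻¹) := by
          gcongr; exact (hw k).trans (hd k).le
      _ = (1 / 2) ^ k := by
          rw [show (4 : ℝ) = 2 * 2 by norm_num, mul_pow]; field_simp; rw [← mul_pow]; norm_num
  obtain ⟨sp, hsp⟩ := hN.exists_tendsto_partialSum hRF (fun k => posPart_nonneg (d k))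
    (hsum _ fun k => hN.posPart_le _)
  obtain ⟨sq, hsq⟩ := hN.exists_tendsto_partialSum hRF (fun k => negPart_nonneg (d k))
    (hsum _ fun k => hN.negPart_le _)
  have htel : ∀ n, f (φ (n + 1)) - (f (φ 0) + (sp - sq)) =
      (∑ i ∈ Finset.range (n + 1), (d i)⁺ - sp) + -(∑ i ∈ Finset.range (n + 1), (d i)⁻ - sq) := by
    intro n
    have h : ∑ i ∈ Finset.range (n + 1), d i = f (φ (n + 1)) - f (φ 0) :=
      Finset.sum_range_sub (fun k => f (φ k)) (n + 1)
    rw [← Finset.sum_congr rfl fun i _ => posPart_sub_negPart (d i), Finset.sum_sub_distrib,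
      eq_sub_iff_add_eq] at h
    rw [← h]
    abel
  refine ⟨f (φ 0) + (sp - sq), hN.tendsto_of_cauchy_of_tendsto_comp hf
    (φ := fun n => φ (n + 1)) (fun n => n.le_succ.trans (hφ.id_le _)) ?_⟩
  simp only [htel]
  exact hN.tendsto_add hsp (by simpa only [hN.map_neg] using hsq)

end IsLatticeQuasiNorm

/-- **Riesz–Fischer type characterization of completeness in quasi-normed
lattices.** A quasi-normed lattice `X` with quasi-triangle constant `K` is
complete iff for every positive sequence `(xₙ)` with `∑ Kⁿ‖xₙ‖ < ∞` the
supremum of the partial sums exists in `X`. -/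
theorem stmt_2 {X : Type*} [Lattice X] [AddCommGroup X]
    [CovariantClass X X (· + ·) (· ≤ ·)] [Module ℝ X]
    (N : X → ℝ) (K : ℝ) (hK : 1 ≤ K)
    (hnonneg : ∀ x, 0 ≤ N x)
    (heq0 : ∀ x, N x = 0 ↔ x = 0)
    (hsmul : ∀ (a : ℝ) (x : X), N (a • x) = |a| * N x)
    (htri : ∀ x y, N (x + y) ≤ K * (N x + N y))
    (hlat : ∀ x y : X, |x| ≤ |y| → N x ≤ N y) :
    (∀ f : ℕ → X,
        (∀ ε : ℝ, 0 < ε → ∃ n₀, ∀ m ≥ n₀, ∀ n ≥ n₀, N (f m - f n) < ε) →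
        ∃ l : X, Tendsto (fun n => N (f n - l)) atTop (nhds 0)) ↔
    (∀ x : ℕ → X, (∀ n, 0 ≤ x n) →
        Summable (fun n => K ^ (n + 1) * N (x n)) →
        ∃ s : X, IsLUB (Set.range fun n => ∑ i ∈ Finset.range (n + 1), x i) s) := by
  have : IsOrderedAddMonoid X := { add_le_add_left := fun _ _ h c => add_le_add_left h c }
  have hN : IsLatticeQuasiNorm K N := ⟨hK, hnonneg, heq0, hsmul, htri, hlat⟩
  exact ⟨hN.rieszFischerProperty_of_complete, hN.complete_of_rieszFischerProperty⟩
end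

section
/- Let Φ be a Young function and X a quasi-Banach function space over μ (i.e., a complete quasi-normed function space). Then the Orlicz space X^Φ equipped with the Luxemburg quasi-norm is complete. -/
open MeasureTheory Filter Set

/-- A Young function: strictly increasing, continuous, convex on `[0,∞)`,
vanishing at `0` and tending to infinity. -/
structure IsYoung (Φ : ℝ → ℝ) : Prop where
  strictMono : StrictMonoOn Φ (Set.Ici 0)
  continuous : ContinuousOn Φ (Set.Ici 0)
  convex : ConvexOn ℝ (Set.Ici 0) Φ
  map_zero : Φ 0 = 0
  tendsto_atTop : Tendsto Φ atTop atTop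

/-- A quasi-normed function space over `μ` with quasi-triangle constant `K`:
an ideal of measurable functions (modulo a.e. equality) containing the
constant function `1`, equipped with a lattice quasi-norm. -/
structure QNFS {α : Type*} [MeasurableSpace α] (μ : Measure α) (K : ℝ) where
  mem : (α → ℝ) → Prop
  nrm : (α → ℝ) → ℝ
  one_le_K : 1 ≤ K
  nrm_nonneg : ∀ f, 0 ≤ nrm f
  nrm_eq_zero : ∀ f, mem f → (nrm f = 0 ↔ f =ᵐ[μ] 0)
  add_mem : ∀ f g, mem f → mem g → mem (f + g)
  smul_mem : ∀ (c : ℝ) (f), mem f → mem (c • f)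
  nrm_smul : ∀ (c : ℝ) (f), mem f → nrm (c • f) = |c| * nrm f
  nrm_add_le : ∀ f g, mem f → mem g → nrm (f + g) ≤ K * (nrm f + nrm g)
  ideal_mem : ∀ f g, mem g → (∀ᵐ x ∂μ, |f x| ≤ |g x|) → mem f
  ideal_nrm : ∀ f g, mem f → mem g → (∀ᵐ x ∂μ, |f x| ≤ |g x|) → nrm f ≤ nrm g
  const_one_mem : mem (fun _ => (1 : ℝ))

variable {α : Type*} [MeasurableSpace α]

/-- Membership in the Orlicz class `X̃^Φ`. -/
def memClass {μ : Measure α} {K : ℝ} (Φ : ℝ → ℝ) (X : QNFS μ K) (f : α → ℝ) : Prop :=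
  X.mem (fun x => Φ |f x|)

/-- Membership in the Orlicz space `X^Φ`. -/
def memOrlicz {μ : Measure α} {K : ℝ} (Φ : ℝ → ℝ) (X : QNFS μ K) (f : α → ℝ) : Prop :=
  ∃ c > 0, X.mem (fun x => Φ (|f x| / c))

/-- The Luxemburg quasi-norm on `X^Φ`. -/
noncomputable def lux {μ : Measure α} {K : ℝ} (Φ : ℝ → ℝ) (X : QNFS μ K) (f : α → ℝ) : ℝ :=
  sInf {k : ℝ | 0 < k ∧ X.mem (fun x => Φ (|f x| / k)) ∧
    X.nrm (fun x => Φ (|f x| / k)) ≤ 1}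

/-- Completeness of a quasi-normed function space: every Cauchy sequence
(w.r.t. the quasi-norm) converges to a member of the space. -/
def CompleteWrt (mem : (α → ℝ) → Prop) (N : (α → ℝ) → ℝ) : Prop :=
  ∀ f : ℕ → α → ℝ, (∀ n, mem (f n)) →
    (∀ ε : ℝ, 0 < ε → ∃ n₀, ∀ m ≥ n₀, ∀ n ≥ n₀, N (f m - f n) < ε) →
    ∃ g : α → ℝ, mem g ∧ Filter.Tendsto (fun n => N (f n - g)) Filter.atTop (nhds 0)

/-
Riesz–Fischer argument. Put `θ = (2K)⁻¹`. In a complete quasi-normed lattice, a series of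
nonnegative functions with norms `O(θ^i)` converges, and since the positive cone is closed its
sum dominates every partial sum almost everywhere; this replaces the missing Fatou property.
For a Luxemburg-Cauchy sequence pass to a subsequence whose increments `h_k` have Luxemburg
constants below `θ^(k+2)`. Convexity gives `Φ(∑ tᵢ) ≤ ∑ 2^-(i+1) Φ(2^(i+1) tᵢ)`, so for every
`j` the functions `Φ(∑_{i<m} |h_{i+j}| / θ^j)` are dominated by one element of `X` of norm at
most `1`. Since `Φ → ∞`, this forces `∑ |h_k|` to converge a.e., and the tails of the series
have Luxemburg constants `≤ θ^j`.
-/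

open Topology

namespace QNFS

variable {μ : Measure α} {K : ℝ}

lemma K_pos (X : QNFS μ K) : 0 < K := one_pos.trans_le X.one_le_K

variable (X : QNFS μ K)

lemma mem_zero : X.mem 0 := by
  simpa using X.smul_mem 0 _ X.const_one_mem

lemma nrm_zero : X.nrm 0 = 0 := by
  simpa using X.nrm_smul 0 _ X.const_one_mem

variable {X}

lemma mem_sub {f g : α → ℝ} (hf : X.mem f) (hg : X.mem g) : X.mem (f - g) := by
  simpa [sub_eq_add_neg] using X.add_mem _ _ hf (X.smul_mem (-1) g hg)

lemma nrm_sub_comm {f g : α → ℝ} (hf : X.mem f) (hg : X.mem g) :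
    X.nrm (f - g) = X.nrm (g - f) := by
  simpa using X.nrm_smul (-1) (g - f) (mem_sub hg hf)

lemma mem_sum {ι : Type*} (s : Finset ι) {u : ι → α → ℝ} (hu : ∀ i ∈ s, X.mem (u i)) :
    X.mem (∑ i ∈ s, u i) :=
  Finset.sum_induction u X.mem (fun _ _ => X.add_mem _ _) X.mem_zero hu

lemma mem_of_ae_le {f g : α → ℝ} (hg : X.mem g) (hf : 0 ≤ f) (hfg : f ≤ᵐ[μ] g) : X.mem f :=
  X.ideal_mem f g hg <| hfg.mono fun x hx => by
    rwa [abs_of_nonneg (hf x), abs_of_nonneg ((hf x).trans hx)]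

lemma nrm_le_of_ae_le {f g : α → ℝ} (hg : X.mem g) (hf : 0 ≤ f) (hfg : f ≤ᵐ[μ] g) :
    X.nrm f ≤ X.nrm g :=
  X.ideal_nrm f g (mem_of_ae_le hg hf hfg) hg <| hfg.mono fun x hx => by
    rwa [abs_of_nonneg (hf x), abs_of_nonneg ((hf x).trans hx)]

lemma nrm_smul_add_smul_le {f g : α → ℝ} (hf : X.mem f) (hg : X.mem g) (hf1 : X.nrm f ≤ 1)
    (hg1 : X.nrm g ≤ 1) {a b : ℝ} (ha : 0 ≤ a) (hb : 0 ≤ b) (hab : a + b = 1) :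
    X.nrm (a • f + b • g) ≤ K := by
  calc X.nrm (a • f + b • g) ≤ K * (a * X.nrm f + b * X.nrm g) := by
        simpa only [X.nrm_smul _ _ hf, X.nrm_smul _ _ hg, abs_of_nonneg ha, abs_of_nonneg hb] using
          X.nrm_add_le (a • f) (b • g) (X.smul_mem _ _ hf) (X.smul_mem _ _ hg)
    _ ≤ K * (a * 1 + b * 1) := by gcongr; exact X.K_pos.le
    _ = K := by rw [mul_one, mul_one, hab, mul_one]

/-- The positive cone of `X` is closed. -/
lemma ae_nonneg_of_tendsto {q : α → ℝ} {p : ℕ → α → ℝ} (hq : X.mem q) (hp : ∀ m, X.mem (p m))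
    (hp0 : ∀ m, 0 ≤ p m) (hlim : Tendsto (fun m => X.nrm (q - p m)) atTop (𝓝 0)) :
    0 ≤ᵐ[μ] q := by
  set r : α → ℝ := fun x => max (-q x) 0
  have hr : ∀ m x, |r x| ≤ |(q - p m) x| := fun m x => by
    have hpx : 0 ≤ p m x := hp0 m x
    rw [abs_of_nonneg (le_max_right _ _), Pi.sub_apply]
    exact max_le (by linarith [neg_le_abs (q x - p m x)]) (abs_nonneg _)
  have hrmem : X.mem r := X.ideal_mem r _ (mem_sub hq (hp 0)) (ae_of_all _ (hr 0))
  have hr0 : X.nrm r = 0 := le_antisymm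
    (ge_of_tendsto' hlim fun m => X.ideal_nrm r _ hrmem (mem_sub hq (hp m)) (ae_of_all _ (hr m)))
    (X.nrm_nonneg r)
  filter_upwards [(X.nrm_eq_zero r hrmem).1 hr0] with x hx
  exact neg_nonpos.1 (max_eq_right_iff.1 hx)

lemma nrm_sum_range_le {u : ℕ → α → ℝ} (hu : ∀ i, X.mem (u i)) {c : ℝ} (hc : 0 ≤ c)
    (hb : ∀ i, X.nrm (u i) ≤ c * (2 * K)⁻¹ ^ i) (M m : ℕ) :
    X.nrm (∑ i ∈ Finset.range M, u (m + i)) ≤ 2 * K * c * (2 * K)⁻¹ ^ m := by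
  have hK := X.K_pos
  induction M generalizing m with
  | zero => simp only [Finset.range_zero, Finset.sum_empty, X.nrm_zero]; positivity
  | succ M ih =>
    have hshift : ∀ i, m + (i + 1) = m + 1 + i := fun i => by omega
    rw [Finset.sum_range_succ', add_zero,
      Finset.sum_congr rfl fun i _ => congrArg u (hshift i)]
    calc _ ≤ K * (X.nrm (∑ i ∈ Finset.range M, u (m + 1 + i)) + X.nrm (u m)) :=
          X.nrm_add_le _ _ (mem_sum _ fun _ _ => hu _) (hu m)
      _ ≤ K * (2 * K * c * (2 * K)⁻¹ ^ (m + 1) + c * (2 * K)⁻¹ ^ m) := by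
          gcongr
          exacts [ih (m + 1), hb m]
      _ = 2 * K * c * (2 * K)⁻¹ ^ m := by
          have h2K : 2 * K * (2 * K)⁻¹ = 1 := mul_inv_cancel₀ (by positivity)
          rw [pow_succ]
          linear_combination (K * c * (2 * K)⁻¹ ^ m) * h2K

lemma cauchy_of_nrm_sub_le_geometric {P : ℕ → α → ℝ} (hP : ∀ m, X.mem (P m)) {C r : ℝ}
    (hr0 : 0 ≤ r) (hr1 : r < 1) (hPtail : ∀ n M, X.nrm (P (n + M) - P n) ≤ C * r ^ n) :
    ∀ ε : ℝ, 0 < ε → ∃ n₀, ∀ m ≥ n₀, ∀ n ≥ n₀, X.nrm (P m - P n) < ε := by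
  intro ε hε
  have hgeom : Tendsto (fun n => C * r ^ n) atTop (𝓝 0) := by
    simpa using (tendsto_pow_atTop_nhds_zero_of_lt_one hr0 hr1).const_mul C
  obtain ⟨n₀, hn₀⟩ := eventually_atTop.1 (hgeom.eventually (gt_mem_nhds hε))
  have key : ∀ m n, n ≤ m → n₀ ≤ n → X.nrm (P m - P n) < ε := fun m n hnm hn => by
    obtain ⟨M, rfl⟩ := Nat.exists_eq_add_of_le hnm
    exact (hPtail n M).trans_lt (hn₀ n hn)
  refine ⟨n₀, fun m hm n hn => ?_⟩
  rcases le_total n m with hnm | hmn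
  · exact key m n hnm hn
  · rw [nrm_sub_comm (hP m) (hP n)]
    exact key n m hmn hm

theorem exists_ae_sum_range_le (hX : CompleteWrt X.mem X.nrm) {u : ℕ → α → ℝ}
    (hu : ∀ i, X.mem (u i)) (hu0 : ∀ i, 0 ≤ u i) {c : ℝ} (hc : 0 ≤ c)
    (hb : ∀ i, X.nrm (u i) ≤ c * (2 * K)⁻¹ ^ i) :
    ∃ U, X.mem U ∧ X.nrm U ≤ 2 * K ^ 2 * c ∧ ∀ m, ∑ i ∈ Finset.range m, u i ≤ᵐ[μ] U := by
  have hK := X.K_pos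
  set P : ℕ → α → ℝ := fun m => ∑ i ∈ Finset.range m, u i with hPdef
  have hP : ∀ m, X.mem (P m) := fun m => mem_sum _ fun i _ => hu i
  have hPsub : ∀ n M, P (n + M) - P n = ∑ i ∈ Finset.range M, u (n + i) := fun n M =>
    Finset.sum_range_add_sub_sum_range u n M
  have hPtail : ∀ n M, X.nrm (P (n + M) - P n) ≤ 2 * K * c * (2 * K)⁻¹ ^ n := fun n M => by
    rw [hPsub]
    exact nrm_sum_range_le hu hc hb M n
  obtain ⟨U, hU, hlim⟩ := hX P hP <| cauchy_of_nrm_sub_le_geometric hP (by positivity)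
    (inv_lt_one_of_one_lt₀ (by linarith [X.one_le_K])) hPtail
  have hlim' : Tendsto (fun m => X.nrm (U - P m)) atTop (𝓝 0) := by
    simpa only [nrm_sub_comm (hP _) hU] using hlim
  refine ⟨U, hU, ?_, fun m => ?_⟩
  · have hbound : ∀ m, X.nrm U ≤ K * (X.nrm (U - P m) + 2 * K * c) := fun m => by
      have hPm : X.nrm (P m) ≤ 2 * K * c := by
        simpa [hPdef] using nrm_sum_range_le hu hc hb m 0
      calc X.nrm U = X.nrm (U - P m + P m) := by rw [sub_add_cancel]
        _ ≤ K * (X.nrm (U - P m) + X.nrm (P m)) := X.nrm_add_le _ _ (mem_sub hU (hP m)) (hP m)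
        _ ≤ K * (X.nrm (U - P m) + 2 * K * c) := by gcongr
    have := ge_of_tendsto' ((hlim'.add_const (2 * K * c)).const_mul K) hbound
    linarith
  · have hnonneg := ae_nonneg_of_tendsto (mem_sub hU (hP m))
      (fun M => mem_sub (hP (m + M)) (hP m))
      (fun M => by rw [hPsub]; exact Finset.sum_nonneg fun i _ => hu0 _)
      ((hlim'.comp (tendsto_add_atTop_nat m)).congr fun M => by
        rw [Function.comp_apply, sub_sub_sub_cancel_right, add_comm])
    filter_upwards [hnonneg] with x hx
    exact sub_nonneg.1 hx

end QNFS

namespace IsYoung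

variable {Φ : ℝ → ℝ} (hΦ : IsYoung Φ)
include hΦ

lemma mono {s t : ℝ} (hs : 0 ≤ s) (hst : s ≤ t) : Φ s ≤ Φ t :=
  hΦ.strictMono.monotoneOn hs (hs.trans hst) hst

lemma nonneg {t : ℝ} (ht : 0 ≤ t) : 0 ≤ Φ t :=
  hΦ.map_zero ▸ hΦ.mono le_rfl ht

lemma map_mul_le {l t : ℝ} (hl0 : 0 ≤ l) (hl1 : l ≤ 1) (ht : 0 ≤ t) : Φ (l * t) ≤ l * Φ t := by
  simpa [hΦ.map_zero] using
    hΦ.convex.2 (Set.mem_Ici.2 ht) Set.self_mem_Ici hl0 (sub_nonneg.2 hl1) (add_sub_cancel l 1)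

lemma map_add_div_le {s t a b : ℝ} (hs : 0 ≤ s) (ht : 0 ≤ t) (ha : 0 < a) (hb : 0 < b) :
    Φ ((s + t) / (a + b)) ≤ a / (a + b) * Φ (s / a) + b / (a + b) * Φ (t / b) := by
  have hab : a / (a + b) + b / (a + b) = 1 := by field_simp
  have hst : (s + t) / (a + b) = a / (a + b) * (s / a) + b / (a + b) * (t / b) := by field_simp
  rw [hst]
  exact hΦ.convex.2 (Set.mem_Ici.2 (by positivity)) (Set.mem_Ici.2 (by positivity))
    (by positivity) (by positivity) hab

/-- Jensen's inequality for the weights `2^-(i+1)`, the missing mass sitting at `0`. -/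
lemma map_sum_range_le (m : ℕ) {t : ℕ → ℝ} (ht : ∀ i, 0 ≤ t i) :
    Φ (∑ i ∈ Finset.range m, t i) ≤
      ∑ i ∈ Finset.range m, (2⁻¹ : ℝ) ^ (i + 1) * Φ (2 ^ (i + 1) * t i) := by
  induction m generalizing t with
  | zero => simp [hΦ.map_zero]
  | succ m ih =>
    have hrest := ih (t := fun i => 2 * t (i + 1)) fun i => by linarith [ht (i + 1)]
    rw [← Finset.mul_sum] at hrest
    have hsum : 0 ≤ ∑ i ∈ Finset.range m, t (i + 1) := Finset.sum_nonneg fun i _ => ht (i + 1)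
    rw [Finset.sum_range_succ', Finset.sum_range_succ']
    calc Φ (∑ i ∈ Finset.range m, t (i + 1) + t 0)
        = Φ (2⁻¹ * (2 * ∑ i ∈ Finset.range m, t (i + 1)) + 2⁻¹ * (2 * t 0)) := by ring_nf
      _ ≤ 2⁻¹ * Φ (2 * ∑ i ∈ Finset.range m, t (i + 1)) + 2⁻¹ * Φ (2 * t 0) :=
          hΦ.convex.2 (Set.mem_Ici.2 (by linarith)) (Set.mem_Ici.2 (by linarith [ht 0]))
            (by norm_num) (by norm_num) (by norm_num)
      _ ≤ 2⁻¹ * ∑ i ∈ Finset.range m, (2⁻¹ : ℝ) ^ (i + 1) * Φ (2 ^ (i + 1) * (2 * t (i + 1)))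
            + 2⁻¹ * Φ (2 * t 0) := by gcongr
      _ = _ := by
          rw [Finset.mul_sum]
          congr 1
          · refine Finset.sum_congr rfl fun i _ => ?_
            rw [pow_succ 2⁻¹ (i + 1), pow_succ 2 (i + 1)]
            ring_nf
          · ring_nf

lemma summable_and_map_tsum_le {t : ℕ → ℝ} (ht : ∀ i, 0 ≤ t i) {C : ℝ}
    (hC : ∀ m, Φ (∑ i ∈ Finset.range m, t i) ≤ C) : Summable t ∧ Φ (∑' i, t i) ≤ C := by
  obtain ⟨T, hT⟩ := eventually_atTop.1 (hΦ.tendsto_atTop.eventually_gt_atTop C)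
  have hs : Summable t :=
    summable_of_sum_range_le ht fun m => not_lt.1 fun h => (hC m).not_gt (hT _ h.le)
  have hpartial : Tendsto (fun m => ∑ i ∈ Finset.range m, t i) atTop (𝓝[Set.Ici 0] ∑' i, t i) :=
    tendsto_nhdsWithin_iff.2 ⟨hs.hasSum.tendsto_sum_nat,
      Eventually.of_forall fun m => Set.mem_Ici.2 (Finset.sum_nonneg fun i _ => ht i)⟩
  exact ⟨hs, le_of_tendsto
    ((hΦ.continuous _ (Set.mem_Ici.2 (tsum_nonneg ht))).tendsto.comp hpartial)
    (Eventually.of_forall hC)⟩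

end IsYoung

section Luxemburg

variable {μ : Measure α} {K : ℝ} {Φ : ℝ → ℝ} {X : QNFS μ K}

def LuxAdmissible (Φ : ℝ → ℝ) (X : QNFS μ K) (u : α → ℝ) (k : ℝ) : Prop :=
  0 < k ∧ X.mem (fun x => Φ (|u x| / k)) ∧ X.nrm (fun x => Φ (|u x| / k)) ≤ 1

lemma lux_nonneg (u : α → ℝ) : 0 ≤ lux Φ X u :=
  Real.sInf_nonneg fun _ hk => hk.1.le

lemma lux_le {u : α → ℝ} {k : ℝ} (h : LuxAdmissible Φ X u k) : lux Φ X u ≤ k :=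
  csInf_le ⟨0, fun _ hk => hk.1.le⟩ h

lemma LuxAdmissible.memOrlicz {u : α → ℝ} {k : ℝ} (h : LuxAdmissible Φ X u k) :
    memOrlicz Φ X u :=
  ⟨k, h.1, h.2.1⟩

lemma memOrlicz_neg {u : α → ℝ} (hu : memOrlicz Φ X u) : memOrlicz Φ X (-u) := by
  simpa [memOrlicz] using hu

variable (hΦ : IsYoung Φ)
include hΦ

lemma luxAdmissible_of_ae_le {u D : α → ℝ} {k : ℝ} (hk : 0 < k) (hD : X.mem D)
    (hD1 : X.nrm D ≤ 1) (huD : ∀ᵐ x ∂μ, Φ (|u x| / k) ≤ D x) : LuxAdmissible Φ X u k :=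
  have hnonneg : 0 ≤ fun x => Φ (|u x| / k) := fun x => hΦ.nonneg (by positivity)
  ⟨hk, X.mem_of_ae_le hD hnonneg huD, (X.nrm_le_of_ae_le hD hnonneg huD).trans hD1⟩

lemma mem_and_nrm_le_of_le {u : α → ℝ} {a k : ℝ} (ha : 0 < a) (hak : a ≤ k)
    (hu : X.mem (fun x => Φ (|u x| / a))) :
    X.mem (fun x => Φ (|u x| / k)) ∧
      X.nrm (fun x => Φ (|u x| / k)) ≤ a / k * X.nrm (fun x => Φ (|u x| / a)) := by
  have hk : 0 < k := ha.trans_le hak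
  have hle : (fun x => Φ (|u x| / k)) ≤ (a / k) • fun x => Φ (|u x| / a) := fun x => by
    have hx : |u x| / k = a / k * (|u x| / a) := by field_simp
    show Φ (|u x| / k) ≤ a / k * Φ (|u x| / a)
    rw [hx]
    exact hΦ.map_mul_le (by positivity) ((div_le_one hk).2 hak) (by positivity)
  have hnonneg : 0 ≤ fun x => Φ (|u x| / k) := fun x => hΦ.nonneg (by positivity)
  have hmem := X.smul_mem (a / k) _ hu
  refine ⟨X.mem_of_ae_le hmem hnonneg (ae_of_all _ hle), ?_⟩
  rw [← abs_of_pos (div_pos ha hk), ← X.nrm_smul _ _ hu]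
  exact X.nrm_le_of_ae_le hmem hnonneg (ae_of_all _ hle)

lemma LuxAdmissible.mem_and_nrm_le {u : α → ℝ} {a k : ℝ} (h : LuxAdmissible Φ X u a)
    (hak : a ≤ k) :
    X.mem (fun x => Φ (|u x| / k)) ∧ X.nrm (fun x => Φ (|u x| / k)) ≤ a / k := by
  obtain ⟨hmem, hnrm⟩ := mem_and_nrm_le_of_le hΦ h.1 hak h.2.1
  exact ⟨hmem, hnrm.trans (mul_le_of_le_one_right (div_nonneg h.1.le (h.1.trans_le hak).le) h.2.2)⟩

lemma exists_luxAdmissible {u : α → ℝ} (hu : memOrlicz Φ X u) : ∃ k, LuxAdmissible Φ X u k := by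
  obtain ⟨c, hc, hmem⟩ := hu
  have hN := X.nrm_nonneg (fun x => Φ (|u x| / c))
  obtain ⟨hmem', hnrm⟩ := mem_and_nrm_le_of_le hΦ hc
    (le_mul_of_one_le_right hc.le (le_add_of_nonneg_left hN)) hmem
  refine ⟨_, by positivity, hmem', hnrm.trans ?_⟩
  rw [div_mul_eq_mul_div, div_le_one (by positivity)]
  exact mul_le_mul_of_nonneg_left (by linarith) hc.le

lemma exists_luxAdmissible_lt {u : α → ℝ} (hu : memOrlicz Φ X u) {ε : ℝ} (h : lux Φ X u < ε) :
    ∃ k, LuxAdmissible Φ X u k ∧ k < ε :=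
  exists_lt_of_csInf_lt (exists_luxAdmissible hΦ hu) h

lemma LuxAdmissible.add {u v : α → ℝ} {a b : ℝ} (hu : LuxAdmissible Φ X u a)
    (hv : LuxAdmissible Φ X v b) : LuxAdmissible Φ X (u + v) (K * (a + b)) := by
  obtain ⟨ha, hmu, hnu⟩ := hu
  obtain ⟨hb, hmv, hnv⟩ := hv
  have hK := X.K_pos
  set F : α → ℝ := fun x => Φ (|u x| / a)
  set G : α → ℝ := fun x => Φ (|v x| / b)
  set W : α → ℝ := K⁻¹ • ((a / (a + b)) • F + (b / (a + b)) • G)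
  have hFG : X.mem ((a / (a + b)) • F + (b / (a + b)) • G) :=
    X.add_mem _ _ (X.smul_mem _ _ hmu) (X.smul_mem _ _ hmv)
  have hW : X.mem W := X.smul_mem _ _ hFG
  refine luxAdmissible_of_ae_le hΦ (by positivity) hW ?_ (ae_of_all _ fun x => ?_)
  · calc X.nrm W = K⁻¹ * X.nrm ((a / (a + b)) • F + (b / (a + b)) • G) := by
          rw [X.nrm_smul _ _ hFG, abs_of_pos (inv_pos.2 hK)]
      _ ≤ K⁻¹ * K := by
          gcongr
          exact X.nrm_smul_add_smul_le hmu hmv hnu hnv (by positivity) (by positivity)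
            (by field_simp)
      _ = 1 := inv_mul_cancel₀ hK.ne'
  · calc Φ (|(u + v) x| / (K * (a + b)))
        ≤ Φ (K⁻¹ * ((|u x| + |v x|) / (a + b))) := by
          have e : K⁻¹ * ((|u x| + |v x|) / (a + b)) = (|u x| + |v x|) / (K * (a + b)) := by
            field_simp
          rw [e]
          exact hΦ.mono (by positivity) (by gcongr; exact abs_add_le _ _)
      _ ≤ K⁻¹ * Φ ((|u x| + |v x|) / (a + b)) :=
          hΦ.map_mul_le (by positivity) (inv_le_one_of_one_le₀ X.one_le_K) (by positivity)
      _ ≤ K⁻¹ * (a / (a + b) * F x + b / (a + b) * G x) := by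
          gcongr
          exact hΦ.map_add_div_le (abs_nonneg _) (abs_nonneg _) ha hb
      _ = W x := by simp only [W, Pi.smul_apply, Pi.add_apply, smul_eq_mul]

lemma memOrlicz_sub {u v : α → ℝ} (hu : memOrlicz Φ X u) (hv : memOrlicz Φ X v) :
    memOrlicz Φ X (u - v) := by
  obtain ⟨a, ha⟩ := exists_luxAdmissible hΦ hu
  obtain ⟨b, hb⟩ := exists_luxAdmissible hΦ (memOrlicz_neg hv)
  simpa [sub_eq_add_neg] using (ha.add hΦ hb).memOrlicz

lemma lux_add_le {u v : α → ℝ} (hu : memOrlicz Φ X u) (hv : memOrlicz Φ X v) :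
    lux Φ X (u + v) ≤ K * (lux Φ X u + lux Φ X v) := by
  have hK := X.K_pos
  have key : ∀ a b, LuxAdmissible Φ X u a → LuxAdmissible Φ X v b →
      lux Φ X (u + v) / K - b ≤ a := fun a b ha hb => by
    rw [sub_le_iff_le_add, div_le_iff₀' hK]
    exact lux_le (ha.add hΦ hb)
  have hu' : lux Φ X (u + v) / K - lux Φ X v ≤ lux Φ X u :=
    le_csInf (exists_luxAdmissible hΦ hu) fun a ha =>
      sub_le_comm.1 <| le_csInf (exists_luxAdmissible hΦ hv) fun b hb =>
        sub_le_comm.1 (key a b ha hb)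
  rw [← div_le_iff₀' hK]
  linarith

end Luxemburg

section Completeness

variable {μ : Measure α} {K : ℝ} {Φ : ℝ → ℝ} {X : QNFS μ K}

lemma exists_strictMono_lt_of_cauchy {E : Type*} [Sub E] {N : E → ℝ} {f : ℕ → E}
    (hf : ∀ ε : ℝ, 0 < ε → ∃ n₀, ∀ m ≥ n₀, ∀ n ≥ n₀, N (f m - f n) < ε) {ε : ℕ → ℝ}
    (hε : ∀ k, 0 < ε k) : ∃ n : ℕ → ℕ, StrictMono n ∧ ∀ k, N (f (n (k + 1)) - f (n k)) < ε k := by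
  choose n₀ hn₀ using fun k => hf (ε k) (hε k)
  obtain ⟨n, hn, hn₀n⟩ := extraction_forall_of_eventually fun k => eventually_ge_atTop (n₀ k)
  exact ⟨n, hn, fun k => hn₀ k _ ((hn₀n k).trans (hn.monotone k.le_succ)) _ (hn₀n k)⟩

lemma tsum_sub_eq_tsum_nat_add {y : ℕ → ℝ} (hy : Summable fun i => y (i + 1) - y i) (j : ℕ) :
    y 0 + ∑' i, (y (i + 1) - y i) - y j = ∑' i, (y (i + j + 1) - y (i + j)) := by
  rw [← hy.sum_add_tsum_nat_add j, Finset.sum_range_sub]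
  ring

variable (hΦ : IsYoung Φ)
include hΦ

theorem exists_ae_map_sum_le (hX : CompleteWrt X.mem X.nrm) {h : ℕ → α → ℝ} {a : ℕ → ℝ} {s : ℝ}
    (hs : 0 < s) (ha : ∀ i, LuxAdmissible Φ X (h i) (a i))
    (has : ∀ i, a i ≤ s * (2 * K)⁻¹ ^ (i + 2)) :
    ∃ D, X.mem D ∧ X.nrm D ≤ 1 ∧
      ∀ᵐ x ∂μ, ∀ m, Φ (∑ i ∈ Finset.range m, |h i x| / s) ≤ D x := by
  have hK1 := X.one_le_K
  set θ : ℝ := (2 * K)⁻¹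
  have hθ : θ ≤ 2⁻¹ := inv_anti₀ two_pos (by linarith)
  have hk : ∀ i, a i ≤ s * 2⁻¹ ^ (i + 1) := fun i => (has i).trans <| by
    gcongr
    calc θ ^ (i + 2) ≤ 2⁻¹ ^ (i + 2) := by gcongr
      _ ≤ 2⁻¹ ^ (i + 1) := pow_le_pow_of_le_one (by norm_num) (by norm_num) (by omega)
  set w : ℕ → α → ℝ := fun i => (2⁻¹ : ℝ) ^ (i + 1) • fun x => Φ (|h i x| / (s * 2⁻¹ ^ (i + 1)))
  have hw : ∀ i, X.mem (w i) ∧ X.nrm (w i) ≤ θ ^ 2 * θ ^ i := fun i => by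
    obtain ⟨hmem, hnrm⟩ := (ha i).mem_and_nrm_le hΦ (hk i)
    refine ⟨X.smul_mem _ _ hmem, ?_⟩
    rw [X.nrm_smul _ _ hmem, abs_of_pos (by positivity)]
    calc _ ≤ 2⁻¹ ^ (i + 1) * (a i / (s * 2⁻¹ ^ (i + 1))) := by gcongr
      _ = a i / s := by field_simp
      _ ≤ θ ^ 2 * θ ^ i := by rw [div_le_iff₀' hs, ← pow_add, add_comm]; exact has i
  have hw0 : ∀ i, 0 ≤ w i := fun i x => mul_nonneg (by positivity) (hΦ.nonneg (by positivity))
  obtain ⟨D, hD, hD1, hDle⟩ :=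
    X.exists_ae_sum_range_le hX (fun i => (hw i).1) hw0 (sq_nonneg θ) fun i => (hw i).2
  refine ⟨D, hD, hD1.trans ?_, ?_⟩
  · have : 2 * K ^ 2 * θ ^ 2 = 2⁻¹ := by simp only [θ]; field_simp
    linarith
  · filter_upwards [ae_all_iff.2 hDle] with x hx m
    calc Φ (∑ i ∈ Finset.range m, |h i x| / s)
        ≤ ∑ i ∈ Finset.range m, (2⁻¹ : ℝ) ^ (i + 1) * Φ (2 ^ (i + 1) * (|h i x| / s)) :=
          hΦ.map_sum_range_le m fun i => by positivity
      _ = (∑ i ∈ Finset.range m, w i) x := by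
          rw [Finset.sum_apply]
          refine Finset.sum_congr rfl fun i _ => ?_
          simp only [w, Pi.smul_apply, smul_eq_mul]
          congr 2
          rw [inv_pow, div_mul_eq_div_div, div_inv_eq_mul]
          ring
      _ ≤ D x := hx m

theorem exists_tendsto_lux_sub (hX : CompleteWrt X.mem X.nrm) {f : ℕ → α → ℝ}
    (hf : ∀ k, memOrlicz Φ X (f k)) (hfast : ∀ k, lux Φ X (f (k + 1) - f k) < (2 * K)⁻¹ ^ (k + 2)) :
    ∃ g, memOrlicz Φ X g ∧ Tendsto (fun j => lux Φ X (f j - g)) atTop (𝓝 0) := by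
  have hK1 := X.one_le_K
  set θ : ℝ := (2 * K)⁻¹
  have hθ0 : 0 < θ := by positivity
  choose a ha haθ using fun k =>
    exists_luxAdmissible_lt hΦ (memOrlicz_sub hΦ (hf (k + 1)) (hf k)) (hfast k)
  choose D hD hD1 hDle using fun j =>
    exists_ae_map_sum_le hΦ hX (pow_pos hθ0 j) (fun i => ha (i + j)) fun i => by
      rw [← pow_add, show j + (i + 2) = i + j + 2 by omega]
      exact (haθ (i + j)).le
  set g : α → ℝ := fun x => f 0 x + ∑' i, (f (i + 1) x - f i x)
  have htail : ∀ j, LuxAdmissible Φ X (f j - g) (θ ^ j) := fun j => by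
    refine luxAdmissible_of_ae_le hΦ (by positivity) (hD j) (hD1 j) ?_
    filter_upwards [hDle j] with x hx
    obtain ⟨hsum, hle⟩ := hΦ.summable_and_map_tsum_le (fun i => by positivity) hx
    have hsum' : Summable fun i => |f (i + j + 1) x - f (i + j) x| :=
      (hsum.mul_right (θ ^ j)).congr fun i => div_mul_cancel₀ _ (pow_pos hθ0 j).ne'
    have hgx : g x - f j x = ∑' i, (f (i + j + 1) x - f (i + j) x) :=
      tsum_sub_eq_tsum_nat_add (y := fun k => f k x)
        ((summable_nat_add_iff (f := fun i => f (i + 1) x - f i x) j).1 hsum'.of_abs) j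
    refine (hΦ.mono (by positivity) ?_).trans hle
    rw [Pi.sub_apply, abs_sub_comm, hgx, tsum_div_const]
    gcongr
    simpa only [Real.norm_eq_abs, Pi.sub_apply] using norm_tsum_le_tsum_norm
      (f := fun i => f (i + j + 1) x - f (i + j) x) (by simpa only [Real.norm_eq_abs] using hsum')
  refine ⟨g, ?_, squeeze_zero (fun j => lux_nonneg _) (fun j => lux_le (htail j))
    (tendsto_pow_atTop_nhds_zero_of_lt_one hθ0.le (inv_lt_one_of_one_lt₀ (by linarith)))⟩
  simpa using memOrlicz_sub hΦ (hf 0) (htail 0).memOrlicz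

theorem tendsto_lux_sub_of_tendsto_subseq {f : ℕ → α → ℝ} (hf : ∀ n, memOrlicz Φ X (f n))
    (hcauchy : ∀ ε : ℝ, 0 < ε → ∃ n₀, ∀ m ≥ n₀, ∀ n ≥ n₀, lux Φ X (f m - f n) < ε)
    {n : ℕ → ℕ} (hn : StrictMono n) {g : α → ℝ} (hg : memOrlicz Φ X g)
    (hlim : Tendsto (fun j => lux Φ X (f (n j) - g)) atTop (𝓝 0)) :
    Tendsto (fun m => lux Φ X (f m - g)) atTop (𝓝 0) := by
  have hK := X.K_pos
  rw [Metric.tendsto_atTop]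
  intro δ hδ
  obtain ⟨n₀, hn₀⟩ := hcauchy (δ / (2 * K)) (by positivity)
  obtain ⟨j, hj, hjn₀⟩ :=
    ((hlim.eventually (gt_mem_nhds (by positivity : 0 < δ / (2 * K)))).and
      (eventually_ge_atTop n₀)).exists
  refine ⟨n₀, fun m hm => ?_⟩
  rw [Real.dist_eq, sub_zero, abs_of_nonneg (lux_nonneg _)]
  calc lux Φ X (f m - g) = lux Φ X ((f m - f (n j)) + (f (n j) - g)) := by rw [sub_add_sub_cancel]
    _ ≤ K * (lux Φ X (f m - f (n j)) + lux Φ X (f (n j) - g)) :=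
        lux_add_le hΦ (memOrlicz_sub hΦ (hf m) (hf (n j))) (memOrlicz_sub hΦ (hf (n j)) hg)
    _ < K * (δ / (2 * K) + δ / (2 * K)) := by
        gcongr
        exact hn₀ m hm _ (hjn₀.trans (hn.id_le j))
    _ = δ := by field_simp; ring

end Completeness

theorem stmt_14_general {μ : Measure α} {K : ℝ}
    (Φ : ℝ → ℝ) (hΦ : IsYoung Φ) (X : QNFS μ K)
    (hX : CompleteWrt X.mem X.nrm) :
    CompleteWrt (memOrlicz Φ X) (lux Φ X) := by
  intro f hf hcauchy
  have hK := X.K_pos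
  obtain ⟨n, hn, hfast⟩ := exists_strictMono_lt_of_cauchy hcauchy
    (ε := fun k => (2 * K)⁻¹ ^ (k + 2)) fun k => by positivity
  obtain ⟨g, hg, hlim⟩ := exists_tendsto_lux_sub hΦ hX (fun k => hf (n k)) hfast
  exact ⟨g, hg, tendsto_lux_sub_of_tendsto_subseq hΦ hf hcauchy hn hg hlim⟩

/-- If `X` is a quasi-Banach function space, then the Orlicz space `X^Φ` with
the Luxemburg quasi-norm is complete (no σ-Fatou property assumed). -/
theorem stmt_14 {μ : Measure α} [IsFiniteMeasure μ] {K : ℝ}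
    (Φ : ℝ → ℝ) (hΦ : IsYoung Φ) (X : QNFS μ K)
    (hX : CompleteWrt X.mem X.nrm) :
    CompleteWrt (memOrlicz Φ X) (lux Φ X) :=
  stmt_14_general Φ hΦ X hX
end

section
/- Let X₀, X₁ be quasi-Banach function spaces over μ, Φ₀, Φ₁ Young functions, 0 < θ < 1, and let Φ be the Young function determined by Φ^{-1} = (Φ₀^{-1})^{1−θ}(Φ₁^{-1})^{θ}. Then for a single q-B.f.s. X, the Calderón product satisfies (X^{Φ₀})^{1−θ}(X^{Φ₁})^{θ} = X^Φ as sets. -/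
open MeasureTheory Filter Set

section Aux

variable {Φ Ψ : ℝ → ℝ}

lemma young_nonneg (hΦ : IsYoung Φ) {t : ℝ} (ht : 0 ≤ t) : 0 ≤ Φ t := by
  have := hΦ.strictMono.monotoneOn Set.self_mem_Ici ht ht
  rwa [hΦ.map_zero] at this

lemma young_div (hΦ : IsYoung Φ) {t k : ℝ} (ht : 0 ≤ t) (hk : 1 ≤ k) :
    Φ (t / k) ≤ Φ t / k := by
  have hk0 : 0 < k := lt_of_lt_of_le one_pos hk
  have ha : (0:ℝ) ≤ 1 - 1/k := by
    have : 1/k ≤ 1 := (div_le_one hk0).mpr hk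
    linarith
  have hb : (0:ℝ) ≤ 1/k := by positivity
  have hab : (1 - 1/k) + 1/k = 1 := by ring
  have h := hΦ.convex.2 Set.self_mem_Ici ht ha hb hab
  simp only [smul_eq_mul, hΦ.map_zero] at h
  have e1 : (1 - 1/k)*0 + (1/k)*t = t/k := by ring
  have e2 : (1 - 1/k)*0 + (1/k)*(Φ t) = Φ t / k := by ring
  rw [e1, e2] at h
  exact h

lemma inv_mono (hΦ : IsYoung Φ)
    (hΨ : ∀ t : ℝ, 0 ≤ t → 0 ≤ Ψ t ∧ Φ (Ψ t) = t ∧ Ψ (Φ t) = t)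
    {s t : ℝ} (hs : 0 ≤ s) (hst : s ≤ t) : Ψ s ≤ Ψ t := by
  by_contra h
  push_neg at h
  have ht : 0 ≤ t := hs.trans hst
  have := hΦ.strictMono (hΨ t ht).1 (hΨ s hs).1 h
  rw [(hΨ s hs).2.1, (hΨ t ht).2.1] at this
  exact absurd hst (not_le.mpr this)

lemma invDiv_young (hΦ : IsYoung Φ)
    (hΨ : ∀ t : ℝ, 0 ≤ t → 0 ≤ Ψ t ∧ Φ (Ψ t) = t ∧ Ψ (Φ t) = t)
    {t k : ℝ} (ht : 0 ≤ t) (hk : 1 ≤ k) : Ψ t / k ≤ Ψ (t / k) := by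
  have hk0 : 0 < k := lt_of_lt_of_le one_pos hk
  have hΨt : 0 ≤ Ψ t := (hΨ t ht).1
  have h1 : Φ (Ψ t / k) ≤ t / k := by
    have := young_div hΦ hΨt hk
    rwa [(hΨ t ht).2.1] at this
  have h2 : Ψ (Φ (Ψ t / k)) ≤ Ψ (t / k) :=
    inv_mono hΦ hΨ (young_nonneg hΦ (by positivity)) h1
  rwa [(hΨ (Ψ t / k) (by positivity)).2.2] at h2

end Aux

variable {α : Type*} [MeasurableSpace α]

/-- Membership in the Calderón product `(X^{Φ₀})^{1-θ}(X^{Φ₁})^{θ}`: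
`|f| ≤ λ|f₀|^{1-θ}|f₁|^{θ}` a.e. for some `λ > 0` and `f₀, f₁` in the unit
balls of `X^{Φ₀}` and `X^{Φ₁}` respectively. -/
def memCalderon {μ : Measure α} {K : ℝ} (Φ₀ Φ₁ : ℝ → ℝ) (X : QNFS μ K)
    (θ : ℝ) (f : α → ℝ) : Prop :=
  ∃ lam : ℝ, 0 < lam ∧ ∃ f₀ f₁ : α → ℝ,
    memOrlicz Φ₀ X f₀ ∧ lux Φ₀ X f₀ ≤ 1 ∧
    memOrlicz Φ₁ X f₁ ∧ lux Φ₁ X f₁ ≤ 1 ∧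
    ∀ᵐ x ∂μ, |f x| ≤ lam * |f₀ x| ^ (1 - θ) * |f₁ x| ^ θ

/-- **Calderón product of Orlicz spaces.** If `Φ⁻¹ = (Φ₀⁻¹)^{1-θ}(Φ₁⁻¹)^θ`,
then `(X^{Φ₀})^{1-θ}(X^{Φ₁})^{θ} = X^Φ` as sets. -/
theorem stmt_19 {μ : Measure α} [IsFiniteMeasure μ] {K : ℝ}
    (Φ₀ Φ₁ Φ Ψ₀ Ψ₁ Ψ : ℝ → ℝ)
    (hΦ₀ : IsYoung Φ₀) (hΦ₁ : IsYoung Φ₁) (hΦ : IsYoung Φ)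
    (hΨ₀ : ∀ t : ℝ, 0 ≤ t → 0 ≤ Ψ₀ t ∧ Φ₀ (Ψ₀ t) = t ∧ Ψ₀ (Φ₀ t) = t)
    (hΨ₁ : ∀ t : ℝ, 0 ≤ t → 0 ≤ Ψ₁ t ∧ Φ₁ (Ψ₁ t) = t ∧ Ψ₁ (Φ₁ t) = t)
    (hΨ : ∀ t : ℝ, 0 ≤ t → 0 ≤ Ψ t ∧ Φ (Ψ t) = t ∧ Ψ (Φ t) = t)
    (θ : ℝ) (hθ0 : 0 < θ) (hθ1 : θ < 1)
    (hinv : ∀ t : ℝ, 0 ≤ t → Ψ t = Ψ₀ t ^ (1 - θ) * Ψ₁ t ^ θ)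
    (X : QNFS μ K) (hX : CompleteWrt X.mem X.nrm) :
    ∀ f : α → ℝ, memCalderon Φ₀ Φ₁ X θ f ↔ memOrlicz Φ X f := by
  intro f
  constructor
  · -- Calderón → Orlicz
    rintro ⟨lam, hlam, f₀, f₁, ⟨c₀, hc₀, hm₀⟩, -, ⟨c₁, hc₁, hm₁⟩, -, hae⟩
    set c' : ℝ := lam * (c₀ ^ (1 - θ) * c₁ ^ θ) with hc'def
    have hp : (0:ℝ) ≤ 1 - θ := by linarith
    have hq : (0:ℝ) ≤ θ := hθ0.le
    have hc' : 0 < c' := by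
      have h0 : (0:ℝ) < c₀ ^ (1 - θ) := Real.rpow_pos_of_pos hc₀ _
      have h1 : (0:ℝ) < c₁ ^ θ := Real.rpow_pos_of_pos hc₁ _
      positivity
    refine ⟨c', hc', ?_⟩
    refine X.ideal_mem _ ((fun x => Φ₀ (|f₀ x| / c₀)) + (fun x => Φ₁ (|f₁ x| / c₁)))
      (X.add_mem _ _ hm₀ hm₁) ?_
    filter_upwards [hae] with x hx
    set a : ℝ := |f₀ x| / c₀ with hadef
    set b : ℝ := |f₁ x| / c₁ with hbdef
    have ha : 0 ≤ a := by positivity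
    have hb : 0 ≤ b := by positivity
    set w : ℝ := Φ₀ a + Φ₁ b with hwdef
    have hw0 : 0 ≤ Φ₀ a := young_nonneg hΦ₀ ha
    have hw1 : 0 ≤ Φ₁ b := young_nonneg hΦ₁ hb
    have hw : 0 ≤ w := by positivity
    -- step 1 : |f x| / c' ≤ a ^ (1-θ) * b ^ θ
    have key1 : |f x| / c' ≤ a ^ (1 - θ) * b ^ θ := by
      have e : lam * |f₀ x| ^ (1 - θ) * |f₁ x| ^ θ = c' * (a ^ (1 - θ) * b ^ θ) := by
        rw [hadef, hbdef, Real.div_rpow (abs_nonneg _) hc₀.le,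
          Real.div_rpow (abs_nonneg _) hc₁.le, hc'def]
        field_simp
      rw [div_le_iff₀ hc']
      calc |f x| ≤ lam * |f₀ x| ^ (1 - θ) * |f₁ x| ^ θ := hx
        _ = c' * (a ^ (1 - θ) * b ^ θ) := e
        _ = a ^ (1 - θ) * b ^ θ * c' := by ring
    -- step 2 : a ^ (1-θ) * b ^ θ ≤ Ψ w
    have key2 : a ^ (1 - θ) * b ^ θ ≤ Ψ w := by
      have ha' : a ≤ Ψ₀ w := by
        have : Ψ₀ (Φ₀ a) ≤ Ψ₀ w := inv_mono hΦ₀ hΨ₀ hw0 (by linarith)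
        rwa [(hΨ₀ a ha).2.2] at this
      have hb' : b ≤ Ψ₁ w := by
        have : Ψ₁ (Φ₁ b) ≤ Ψ₁ w := inv_mono hΦ₁ hΨ₁ hw1 (by linarith)
        rwa [(hΨ₁ b hb).2.2] at this
      rw [hinv w hw]
      exact mul_le_mul (Real.rpow_le_rpow ha ha' hp) (Real.rpow_le_rpow hb hb' hq)
        (Real.rpow_nonneg hb _) (Real.rpow_nonneg ((hΨ₀ w hw).1) _)
    -- conclude
    have hΨw : 0 ≤ Ψ w := (hΨ w hw).1
    have key : Φ (|f x| / c') ≤ w := by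
      have h1 : Φ (|f x| / c') ≤ Φ (Ψ w) :=
        hΦ.strictMono.monotoneOn (by positivity : (0:ℝ) ≤ |f x| / c') hΨw
          (key1.trans key2)
      rwa [(hΨ w hw).2.1] at h1
    have hΦf : 0 ≤ Φ (|f x| / c') := young_nonneg hΦ (by positivity)
    calc |Φ (|f x| / c')| = Φ (|f x| / c') := abs_of_nonneg hΦf
      _ ≤ w := key
      _ = |((fun x => Φ₀ (|f₀ x| / c₀)) + fun x => Φ₁ (|f₁ x| / c₁)) x| := by
          rw [Pi.add_apply, abs_of_nonneg (add_nonneg hw0 hw1)]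
  · -- Orlicz → Calderón
    rintro ⟨c, hc, hmem⟩
    set g : α → ℝ := fun x => Φ (|f x| / c) with hgdef
    have hg0 : ∀ x, 0 ≤ g x := fun x => young_nonneg hΦ (by positivity)
    set k : ℝ := max 1 (X.nrm g) with hkdef
    have hk1 : 1 ≤ k := le_max_left _ _
    have hk0 : 0 < k := lt_of_lt_of_le one_pos hk1
    have hgk : ∀ x, 0 ≤ g x / k := fun x => div_nonneg (hg0 x) hk0.le
    set f₀ : α → ℝ := fun x => Ψ₀ (g x / k) with hf₀def
    set f₁ : α → ℝ := fun x => Ψ₁ (g x / k) with hf₁def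
    have hf₀n : ∀ x, 0 ≤ f₀ x := fun x => (hΨ₀ _ (hgk x)).1
    have hf₁n : ∀ x, 0 ≤ f₁ x := fun x => (hΨ₁ _ (hgk x)).1
    have hmemk : X.mem (k⁻¹ • g) := X.smul_mem _ _ hmem
    have heq₀ : (fun x => Φ₀ (|f₀ x| / 1)) = k⁻¹ • g := by
      funext x
      rw [Pi.smul_apply, smul_eq_mul, div_one, abs_of_nonneg (hf₀n x), hf₀def,
        (hΨ₀ _ (hgk x)).2.1]
      ring
    have heq₁ : (fun x => Φ₁ (|f₁ x| / 1)) = k⁻¹ • g := by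
      funext x
      rw [Pi.smul_apply, smul_eq_mul, div_one, abs_of_nonneg (hf₁n x), hf₁def,
        (hΨ₁ _ (hgk x)).2.1]
      ring
    have hnrm : X.nrm (k⁻¹ • g) ≤ 1 := by
      rw [X.nrm_smul _ _ hmem, abs_of_nonneg (by positivity : (0:ℝ) ≤ k⁻¹)]
      rw [inv_mul_le_iff₀ hk0, mul_one]
      exact le_max_right _ _
    have hlux : ∀ (Θ : ℝ → ℝ) (F : α → ℝ),
        ((fun x => Θ (|F x| / 1)) = k⁻¹ • g) → lux Θ X F ≤ 1 := by
      intro Θ F hFeq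
      have h1 : (1:ℝ) ∈ {k' : ℝ | 0 < k' ∧ X.mem (fun x => Θ (|F x| / k')) ∧
          X.nrm (fun x => Θ (|F x| / k')) ≤ 1} := by
        refine ⟨one_pos, ?_, ?_⟩
        · rw [hFeq]; exact hmemk
        · rw [hFeq]; exact hnrm
      exact csInf_le ⟨0, fun x hx => hx.1.le⟩ h1
    refine ⟨c * k, by positivity, f₀, f₁, ⟨1, one_pos, by rw [heq₀]; exact hmemk⟩,
      hlux Φ₀ f₀ heq₀, ⟨1, one_pos, by rw [heq₁]; exact hmemk⟩, hlux Φ₁ f₁ heq₁, ?_⟩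
    filter_upwards with x
    have h1 : |f x| / (c * k) = (|f x| / c) / k := by
      field_simp
    have h2 : (|f x| / c) / k ≤ Ψ (g x / k) := by
      have := invDiv_young hΦ hΨ (hg0 x) hk1
      rwa [hgdef, (hΨ _ (by positivity : (0:ℝ) ≤ |f x| / c)).2.2] at this
    have h3 : Ψ (g x / k) = |f₀ x| ^ (1 - θ) * |f₁ x| ^ θ := by
      rw [hinv _ (hgk x), abs_of_nonneg (hf₀n x), abs_of_nonneg (hf₁n x)]
    calc |f x| = (c * k) * (|f x| / (c * k)) := by field_simp
      _ ≤ (c * k) * Ψ (g x / k) := by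
          refine mul_le_mul_of_nonneg_left ?_ (by positivity)
          rw [h1]; exact h2
      _ = c * k * |f₀ x| ^ (1 - θ) * |f₁ x| ^ θ := by rw [h3]; ring
end
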